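/- If f is a morphism such that the image under f of every k-power-free word of length at most k+1 is k-power-free (k ≥ 3) and f is not the empty morphism, then f is a ps-morphism. -/
import Mathlib


/-- n-fold power of a word (list) under concatenation. -/
def wpow {α : Type*} (u : List α) (n : ℕ) : List α := (List.replicate n u).flatten

/-- A word is k-power-free if it contains no factor `u^k` with `u` non-empty. -/
def kPowerFree {α : Type*} (k : ℕ) (w : List α) : Prop :=
  ∀ u : List α, u ≠ [] → ¬ (wpow u k <:+: w)

/-- Extension of a letter map to a morphism of free monoids. -/
def applyMorph {α β : Type*} (g : α → List β) (w : List α) : List β := w.flatMap g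

lemma wpow_succ {α : Type*} (u : List α) (n : ℕ) : wpow u (n+1) = u ++ wpow u n := by
  simp [wpow, List.replicate_succ]

lemma wpow_succ' {α : Type*} (u : List α) (n : ℕ) : wpow u (n+1) = wpow u n ++ u := by
  simp [wpow, List.replicate_succ']

lemma wpow_shift {α : Type*} (x y : List α) (n : ℕ) :
    wpow (x++y) n ++ x = x ++ wpow (y++x) n := by
  induction n with
  | zero => simp [wpow]
  | succ n ih =>
    rw [wpow_succ, wpow_succ, List.append_assoc, List.append_assoc, ih]
    simp

lemma wpow_rot {α : Type*} (p s : List α) (n : ℕ) :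
    wpow (s++p) (n+1) = s ++ wpow (p++s) n ++ p := by
  rw [wpow_succ', ← wpow_shift]
  simp

lemma length_wpow {α : Type*} (u : List α) (n : ℕ) : (wpow u n).length = n * u.length := by
  induction n with
  | zero => simp [wpow]
  | succ n ih => rw [wpow_succ]; simp [ih, Nat.succ_mul]; ring

lemma wpow_singleton {α : Type*} (x : α) (n : ℕ) : wpow [x] n = List.replicate n x := by
  induction n with
  | zero => simp [wpow]
  | succ n ih => rw [wpow_succ, ih]; simp [List.replicate_succ]

lemma small_power {β : Type*} {u w : List β} {k : ℕ} (hk : 2 ≤ k) (hu : u ≠ [])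
    (hlen : w.length ≤ k+1) (hinf : wpow u k <:+: w) : ∃ x, u = [x] := by
  have h1 := hinf.length_le
  rw [length_wpow] at h1
  match u, hu with
  | [x], _ => exact ⟨x, rfl⟩
  | x :: y :: t, _ =>
    exfalso
    have h2 : 2 ≤ (x :: y :: t).length := by simp
    have := Nat.mul_le_mul_left k h2
    omega

lemma applyMorph_replicate {α β : Type*} (g : α → List β) (a : α) (n : ℕ) :
    applyMorph g (List.replicate n a) = wpow (g a) n := by
  induction n with
  | zero => simp [wpow, applyMorph]
  | succ n ih => rw [List.replicate_succ, wpow_succ, ← ih]; simp [applyMorph]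

lemma replicate_expand3 {α : Type*} (x : α) (n : ℕ) :
    List.replicate (n+3) x = x :: x :: x :: List.replicate n x := by
  simp [List.replicate_succ]

theorem images_kPowerFree_implies_ps {α β : Type*} (g : α → List β) (k : ℕ)
    (hk : 3 ≤ k)
    (h : ∀ w : List α, w.length ≤ k + 1 → kPowerFree k w →
      kPowerFree k (applyMorph g w))
    (hne : ∃ a : α, g a ≠ []) :
    ∀ (a b c : α) (p s s' p' : List β),
      g a = p ++ s → g b = p ++ s' → g c = p' ++ s → b = a ∨ c = a := by
  classical
  intro a b c p s s' p' ha hb hc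
  by_contra hcon
  push_neg at hcon
  obtain ⟨hb', hc'⟩ := hcon
  obtain ⟨k', rfl⟩ : ∃ k', k = k' + 3 := ⟨k - 3, by omega⟩
  -- Step 1: g a ≠ []
  have hga : g a ≠ [] := by
    intro hga
    obtain ⟨d, hd⟩ := hne
    have had : a ≠ d := by rintro rfl; exact hd hga
    set w : List α := d :: a :: List.replicate (k'+2) d with hw
    have hwlen : w.length ≤ k' + 3 + 1 := by simp [hw]
    have hwfree : kPowerFree (k'+3) w := by
      intro u hu hinf
      obtain ⟨x, rfl⟩ := small_power (by omega) hu (by simp [hw]) hinf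
      rw [wpow_singleton] at hinf
      obtain ⟨t, r, heq⟩ := hinf
      have hlen : t.length + r.length = 1 := by
        have := congrArg List.length heq
        simp [hw] at this
        omega
      rcases t with _ | ⟨y, t⟩
      · rw [replicate_expand3] at heq
        simp [hw] at heq
        exact had (by rw [← heq.2.1, heq.1])
      · simp at hlen
        have ht : t = [] := List.eq_nil_of_length_eq_zero (by omega)
        have hr : r = [] := List.eq_nil_of_length_eq_zero (by omega)
        subst ht; subst hr
        rw [replicate_expand3] at heq
        simp [hw, List.replicate_succ] at heq
        exact had (by rw [← heq.2.1, heq.2.2.1])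
    have himg : applyMorph g w = wpow (g d) (k'+3) := by
      rw [hw, wpow_succ]
      simp [applyMorph, hga]
      have := applyMorph_replicate g d (k'+2)
      simpa [applyMorph] using this
    exact h w hwlen hwfree (g d) hd (by rw [himg])
  -- Step 2: the main word c a^{k+2} b
  set w : List α := c :: (List.replicate (k'+2) a ++ [b]) with hw
  have hwlen : w.length ≤ k' + 3 + 1 := by simp [hw]
  have hwfree : kPowerFree (k'+3) w := by
    intro u hu hinf
    obtain ⟨x, rfl⟩ := small_power (by omega) hu (by simp [hw]) hinf
    rw [wpow_singleton] at hinf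
    have hcount := hinf.sublist.count_le x
    rw [List.count_replicate_self] at hcount
    by_cases hxa : x = a
    · subst hxa
      have hcx : ¬ (c = x) := hc'
      have hbx : ¬ (b = x) := hb'
      simp [hw, List.count_cons, List.count_append, List.count_replicate, hcx, hbx,
        List.count_singleton] at hcount
    · have : List.count x w ≤ 2 := by
        have hxa' : ¬ (a = x) := fun e => hxa e.symm
        simp [hw, List.count_cons, List.count_append, List.count_replicate, hxa',
          List.count_singleton]
        split_ifs <;> omega
      omega
  have hsp : s ++ p ≠ [] := by
    intro e
    apply hga
    rw [ha]
    have := congrArg List.length e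
    simp at this
    simp [this.1, this.2]
  have himg : applyMorph g w = p' ++ wpow (s ++ p) (k'+3) ++ s' := by
    rw [wpow_rot]
    rw [hw]
    simp only [applyMorph, List.flatMap_cons, List.flatMap_append]
    have hrep := applyMorph_replicate g a (k'+2)
    simp only [applyMorph] at hrep
    rw [hrep, ha, hb, hc]
    simp
  exact h w hwlen hwfree (s ++ p) hsp ⟨p', s', by rw [himg]⟩
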